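/- arXiv:1904.04513 — 3 statements merged into one kernel-verified Lean document; each statement's English description precedes it below -/
import Mathlib

section
/- For some forward trie T_f with n nodes over a constant-size alphabet, the suffix tree STree(T_f) has Ω(n²) nodes and Ω(n²) edges. -/
/-- A rooted labeled tree on `n` nodes: node `0` is the root, every non-root
node `v` has a parent with smaller index, and `label v` is the character on
the edge between `v` and its parent. -/
structure LTree (n : ℕ) (A : Type*) where
  parent : Fin n → Fin n
  label : Fin n → A
  hp : ∀ v : Fin n, v.val ≠ 0 → (parent v).val < v.val

namespace LTree

variable {n : ℕ} {A : Type*}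

/-- The string spelled by the path from node `v` up to the root
(read in the leaf-to-root direction). -/
def strUp (T : LTree n A) (v : Fin n) : List A :=
  if h : v.val = 0 then []
  else T.label v :: T.strUp (T.parent v)
termination_by v.val
decreasing_by exact T.hp v h

/-- Substrings of the backward trie: strings spelled by upward paths from a
node to one of its ancestors (prefixes of the upward root-paths). -/
def SubstrU (T : LTree n A) : Set (List A) :=
  { s | ∃ (v : Fin n) (m : ℕ), s = (T.strUp v).take m }

/-- Substrings of the forward trie: strings spelled by downward paths from a
node to one of its descendants. -/
def SubstrD (T : LTree n A) : Set (List A) :=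
  { s | ∃ (v : Fin n) (m : ℕ), s = ((T.strUp v).take m).reverse }

/-- A node is a leaf if no (non-root) node has it as parent. -/
def isLeaf (T : LTree n A) (v : Fin n) : Prop :=
  ∀ u : Fin n, u.val ≠ 0 → T.parent u ≠ v

/-- Suffixes of the forward trie: strings spelled by downward paths from any
node to a leaf below it. -/
def SuffixF (T : LTree n A) : Set (List A) :=
  { s | ∃ v : Fin n, T.isLeaf v ∧ ∃ m : ℕ, s = ((T.strUp v).take m).reverse }

/-- Suffixes of the backward trie: strings spelled by the paths from any
non-root node up to the root. -/
def SuffixB (T : LTree n A) : Set (List A) :=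
  { s | ∃ v : Fin n, v.val ≠ 0 ∧ s = T.strUp v }

/-- The trie condition: out-going edges of each node (equivalently, edges to
the children of each node) carry mutually distinct characters. -/
def isTrie (T : LTree n A) : Prop :=
  ∀ u v : Fin n, u.val ≠ 0 → v.val ≠ 0 →
    T.parent u = T.parent v → T.label u = T.label v → u = v

/-- `X` is right-maximal on the forward trie: it has two distinct right
extensions, or an occurrence ending at a leaf. -/
def rightMaximalF (T : LTree n A) (X : List A) : Prop :=
  (∃ a b : A, a ≠ b ∧ X ++ [a] ∈ T.SubstrD ∧ X ++ [b] ∈ T.SubstrD) ∨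
  (∃ v : Fin n, T.isLeaf v ∧ ∃ m : ℕ, X = ((T.strUp v).take m).reverse)

/-- `X` is left-maximal on the forward trie: it has two distinct left
extensions, or an occurrence beginning at the root. -/
def leftMaximalF (T : LTree n A) (X : List A) : Prop :=
  (∃ a b : A, a ≠ b ∧ (a :: X) ∈ T.SubstrD ∧ (b :: X) ∈ T.SubstrD) ∨
  (∃ v : Fin n, X = (T.strUp v).reverse)

/-- `Y` is left-maximal on the backward trie: two distinct left extensions,
or an occurrence beginning at a leaf. -/
def leftMaximalB (T : LTree n A) (Y : List A) : Prop :=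
  (∃ a b : A, a ≠ b ∧ (a :: Y) ∈ T.SubstrU ∧ (b :: Y) ∈ T.SubstrU) ∨
  (∃ v : Fin n, T.isLeaf v ∧ ∃ m : ℕ, Y = (T.strUp v).take m)

/-- `Y` is right-maximal on the backward trie: two distinct right extensions,
or an occurrence ending at the root. -/
def rightMaximalB (T : LTree n A) (Y : List A) : Prop :=
  (∃ a b : A, a ≠ b ∧ Y ++ [a] ∈ T.SubstrU ∧ Y ++ [b] ∈ T.SubstrU) ∨
  (∃ v : Fin n, Y = T.strUp v)

end LTree

/-!
Take a path spelling `0ᵏ 1ᵏ` down from the root and hang a leaf edge labelled `2`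
below each of the `k` nodes of the `1ᵏ` part. This trie has `3k + 1` nodes, and for
`t ≤ k`, `1 ≤ i ≤ k` the string `0ᵗ 1ⁱ 2` is spelled by a downward path ending at a leaf,
hence is right-maximal. These `k (k + 1)` strings are pairwise distinct.
-/

open List

namespace LTree

variable {n : ℕ} {A : Type*}

theorem strUp_of_ne_zero (T : LTree n A) {v : Fin n} (hv : v.val ≠ 0) :
    T.strUp v = T.label v :: T.strUp (T.parent v) := by
  rw [strUp, dif_neg hv]

theorem length_strUp_le (T : LTree n A) (v : Fin n) : (T.strUp v).length ≤ v.val := by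
  induction v using WellFoundedLT.induction with
  | _ v ih =>
    by_cases hv : v.val = 0
    · simp [strUp, hv]
    · have hlt := T.hp v hv
      have := ih (T.parent v) hlt
      rw [T.strUp_of_ne_zero hv, length_cons]
      omega

theorem finite_SubstrD [Finite A] (T : LTree n A) : T.SubstrD.Finite := by
  refine (finite_length_le A n).subset ?_
  rintro _ ⟨v, m, rfl⟩
  have := T.length_strUp_le v
  simp only [Set.mem_ofPred_eq, length_reverse, length_take]
  omega

/-- Nodes `1, …, k` spell `0ᵏ` down from the root, nodes `k + 1, …, 2k` continue with `1ᵏ`,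
and node `2k + i` is a leaf hanging below node `k + i` by an edge labelled `2`. -/
def comb (k : ℕ) : LTree (3 * k + 1) (Fin 3) where
  parent v := if v.val ≤ 2 * k then ⟨v.val - 1, by omega⟩ else ⟨v.val - k, by omega⟩
  label v := if v.val ≤ k then 0 else if v.val ≤ 2 * k then 1 else 2
  hp v hv := by split <;> simp only [] <;> omega

variable {k : ℕ}

theorem comb_parent_val (v : Fin (3 * k + 1)) :
    ((comb k).parent v).val = if v.val ≤ 2 * k then v.val - 1 else v.val - k := by
  simp only [comb]
  split <;> rfl

theorem comb_label (v : Fin (3 * k + 1)) :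
    (comb k).label v = if v.val ≤ k then 0 else if v.val ≤ 2 * k then 1 else 2 :=
  rfl

theorem isTrie_comb : (comb k).isTrie := by
  intro u v _ _ hpar hlab
  have hval := congrArg Fin.val hpar
  rw [comb_parent_val, comb_parent_val] at hval
  rw [comb_label, comb_label] at hlab
  have := u.isLt
  have := v.isLt
  apply Fin.ext
  split_ifs at hval hlab <;> omega

theorem isLeaf_comb {i : ℕ} (hi : 1 ≤ i) (hik : i ≤ k) :
    (comb k).isLeaf ⟨2 * k + i, by omega⟩ := by
  intro u _ hpar
  have hval := congrArg Fin.val hpar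
  simp only [comb_parent_val] at hval
  have := u.isLt
  split_ifs at hval <;> omega

theorem strUp_comb_of_le {p : ℕ} (hp : p ≤ k) :
    (comb k).strUp ⟨p, by omega⟩ = replicate p 0 := by
  induction p with
  | zero => simp [strUp]
  | succ p ih =>
    have hpar : (comb k).parent ⟨p + 1, by omega⟩ = ⟨p, by omega⟩ := by
      ext; simp only [comb_parent_val]; split_ifs <;> omega
    rw [strUp_of_ne_zero _ (by simp), hpar, ih (by omega), comb_label, if_pos hp,
      replicate_succ]

theorem strUp_comb_add {i : ℕ} (hi : i ≤ k) :
    (comb k).strUp ⟨k + i, by omega⟩ = replicate i 1 ++ replicate k 0 := by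
  induction i with
  | zero => simpa using strUp_comb_of_le (le_refl k)
  | succ i ih =>
    have hpar : (comb k).parent ⟨k + (i + 1), by omega⟩ = ⟨k + i, by omega⟩ := by
      ext; simp only [comb_parent_val]; split_ifs <;> omega
    rw [strUp_of_ne_zero _ (by simp), hpar, ih (by omega), comb_label,
      if_neg (by simp), if_pos (by simp; omega), replicate_succ, cons_append]

theorem strUp_comb_leaf {i : ℕ} (hi : 1 ≤ i) (hik : i ≤ k) :
    (comb k).strUp ⟨2 * k + i, by omega⟩ = 2 :: (replicate i 1 ++ replicate k 0) := by
  have hpar : (comb k).parent ⟨2 * k + i, by omega⟩ = ⟨k + i, by omega⟩ := by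
    ext; simp only [comb_parent_val]; split_ifs <;> omega
  rw [strUp_of_ne_zero _ (by simp; omega), hpar, strUp_comb_add hik, comb_label,
    if_neg (by simp; omega), if_neg (by simp; omega)]

theorem rightMaximal_comb {t i : ℕ} (ht : t ≤ k) (hi : 1 ≤ i) (hik : i ≤ k) :
    replicate t 0 ++ replicate i 1 ++ [2] ∈
      {X | X ∈ (comb k).SubstrD ∧ (comb k).rightMaximalF X} := by
  have hspell : replicate t 0 ++ replicate i 1 ++ [2] =
      (((comb k).strUp ⟨2 * k + i, by omega⟩).take (i + 1 + t)).reverse := by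
    rw [strUp_comb_leaf hi hik, ← cons_append, take_append, take_of_length_le (by simp),
      length_cons, length_replicate, Nat.add_sub_cancel_left, take_replicate, min_eq_left ht]
    simp
  exact ⟨⟨_, _, hspell⟩, Or.inr ⟨_, isLeaf_comb hi hik, _, hspell⟩⟩

theorem injective_replicate_zero_one_two :
    Function.Injective fun p : ℕ × ℕ =>
      replicate p.1 (0 : Fin 3) ++ replicate (p.2 + 1) 1 ++ [2] := by
  intro p q h
  have hcount := congrArg (count (0 : Fin 3)) h
  have hlen := congrArg length h
  simp only [count_append, count_replicate, count_singleton', length_append, length_replicate,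
    length_singleton, beq_iff_eq, if_true, if_false, Fin.reduceEq] at hcount hlen
  ext <;> omega

theorem mul_succ_le_ncard_rightMaximal_comb :
    k * (k + 1) ≤ {X | X ∈ (comb k).SubstrD ∧ (comb k).rightMaximalF X}.ncard := by
  have hcard : ((Finset.range (k + 1) ×ˢ Finset.range k : Finset (ℕ × ℕ)) : Set (ℕ × ℕ)).ncard =
      k * (k + 1) := by
    rw [Set.ncard_coe_finset, Finset.card_product, Finset.card_range, Finset.card_range, mul_comm]
  rw [← hcard]
  refine Set.ncard_le_ncard_of_injOn _ ?_ injective_replicate_zero_one_two.injOn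
    ((finite_SubstrD _).subset fun _ hX => hX.1)
  intro ⟨t, i⟩ hti
  simp only [Finset.coe_product, Finset.coe_range, Set.mem_prod, Set.mem_Iio] at hti
  exact rightMaximal_comb (by omega) (by omega) (by omega)

end LTree

/-- The nodes of `STree(T_f)` are the right-maximal substrings of `T_f` (the root being the empty
string), and its edges correspond to its non-root nodes. -/
theorem stmt7 :
    ∀ j : ℕ, 1 ≤ j → ∃ (n : ℕ) (T : LTree n (Fin 3)),
      T.isTrie ∧ 2 ^ j ≤ n ∧ n ≤ 4 * 2 ^ j ∧
      2 ^ j * (2 ^ j + 1) ≤ {X | X ∈ T.SubstrD ∧ T.rightMaximalF X}.ncard ∧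
      2 ^ j * 2 ^ j ≤ {X | X ∈ T.SubstrD ∧ T.rightMaximalF X}.ncard - 1 := by
  intro j _
  have hk : 1 ≤ 2 ^ j := Nat.one_le_two_pow
  have hcount := LTree.mul_succ_le_ncard_rightMaximal_comb (k := 2 ^ j)
  refine ⟨3 * 2 ^ j + 1, LTree.comb (2 ^ j), LTree.isTrie_comb, by omega, by omega, hcount, ?_⟩
  rw [Nat.mul_succ] at hcount
  omega
end

section
/- For every n and suitable σ = Θ(n), there exists an acyclic DFA (indeed a trie) with n states such that the smallest DFA accepting the set Suffix(T_f) of all its suffixes has Ω(σn) = Ω(n²) transitions. In particular, merging all final (sink) states of the DAWG of the broom-like trie does not reduce the number of transitions below σ(n − σ − 2). -/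
/-- A partial deterministic finite automaton. -/
structure PDFA (A : Type*) (Q : Type*) where
  step : Q → A → Option Q
  start : Q
  accept : Set Q

namespace PDFA

def evalFrom {A Q : Type*} (M : PDFA A Q) (q : Q) (w : List A) : Option Q :=
  w.foldl (fun s a => s.bind fun q' => M.step q' a) (some q)

/-- The language accepted by a partial DFA. -/
def lang {A Q : Type*} (M : PDFA A Q) : Set (List A) :=
  {w | ∃ q ∈ M.accept, M.evalFrom M.start w = some q}

/-- The number of (defined) transitions of a partial DFA. -/
noncomputable def transitions {A Q : Type*} (M : PDFA A Q) : ℕ :=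
  {p : Q × A | M.step p.1 p.2 ≠ none}.ncard

end PDFA


/-! ### Auxiliary lemmas about partial DFAs -/

theorem PDFA.foldl_eq_bind {A Q : Type*} (M : PDFA A Q) (w : List A) (o : Option Q) :
    w.foldl (fun s a => s.bind fun q' => M.step q' a) o
      = o.bind fun q' => M.evalFrom q' w := by
  induction w generalizing o with
  | nil => cases o <;> simp [PDFA.evalFrom]
  | cons a w ih =>
    rw [List.foldl_cons, ih]
    cases o with
    | none => simp
    | some q =>
      simp only [Option.bind_some]
      rw [PDFA.evalFrom, List.foldl_cons]
      rw [ih]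
      simp only [Option.bind_some]

theorem PDFA.evalFrom_append {A Q : Type*} (M : PDFA A Q) (q : Q) (w1 w2 : List A) :
    M.evalFrom q (w1 ++ w2) = (M.evalFrom q w1).bind fun q' => M.evalFrom q' w2 := by
  rw [PDFA.evalFrom, List.foldl_append, PDFA.foldl_eq_bind]
  rfl

theorem PDFA.evalFrom_singleton {A Q : Type*} (M : PDFA A Q) (q : Q) (a : A) :
    M.evalFrom q [a] = M.step q a := by
  simp [PDFA.evalFrom]

/-! ### The broom trie -/

def bparent (n σ : ℕ) (v : Fin n) : Fin n :=
  if v.val ≤ n - σ - 1 then ⟨v.val - 1, by have := v.isLt; omega⟩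
  else ⟨n - σ - 1, by have := v.isLt; omega⟩

def blabel (n σ : ℕ) (v : Fin n) : Fin (σ + 1) :=
  if v.val ≤ n - σ - 1 then ⟨0, by omega⟩
  else ⟨v.val - (n - σ - 1), by have := v.isLt; omega⟩

def broom (n σ : ℕ) : LTree n (Fin (σ + 1)) :=
  ⟨bparent n σ, blabel n σ, by
    intro v hv
    unfold bparent
    split_ifs with h1
    · show v.val - 1 < v.val; omega
    · show n - σ - 1 < v.val; omega⟩

theorem broom_parent (n σ : ℕ) : (broom n σ).parent = bparent n σ := rfl
theorem broom_label (n σ : ℕ) : (broom n σ).label = blabel n σ := rfl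

theorem broom_isTrie (n σ : ℕ) (h : σ + 3 ≤ n) : (broom n σ).isTrie := by
  intro u v hu hv hpar hlab
  rw [broom_parent] at hpar
  rw [broom_label] at hlab
  unfold bparent at hpar
  unfold blabel at hlab
  have hun := u.isLt
  have hvn := v.isLt
  apply Fin.ext
  by_cases h1 : u.val ≤ n - σ - 1 <;> by_cases h2 : v.val ≤ n - σ - 1
  · rw [if_pos h1, if_pos h2] at hpar
    simp only [Fin.mk.injEq] at hpar
    omega
  · rw [if_pos h1, if_neg h2] at hpar
    simp only [Fin.mk.injEq] at hpar
    omega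
  · rw [if_neg h1, if_pos h2] at hpar
    simp only [Fin.mk.injEq] at hpar
    omega
  · rw [if_neg h1, if_neg h2] at hlab
    simp only [Fin.mk.injEq] at hlab
    omega

theorem broom_strUp_path (n σ : ℕ) :
    ∀ j, j ≤ n - σ - 1 → ∀ (hjn : j < n),
      (broom n σ).strUp ⟨j, hjn⟩ = List.replicate j (0 : Fin (σ + 1)) := by
  intro j
  induction j with
  | zero => intro _ _; rw [LTree.strUp]; simp
  | succ j ih =>
    intro hj hjn
    rw [LTree.strUp]
    rw [dif_neg (by simp)]
    have hlab : (broom n σ).label ⟨j + 1, hjn⟩ = ⟨0, by omega⟩ := by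
      rw [broom_label]; unfold blabel; rw [if_pos hj]
    have hpar : (broom n σ).parent ⟨j + 1, hjn⟩ = ⟨j, by omega⟩ := by
      rw [broom_parent]; unfold bparent; rw [if_pos hj]; exact Fin.ext rfl
    rw [hlab, hpar, ih (by omega) (by omega)]
    rw [List.replicate_succ]
    congr 1

theorem broom_strUp_leaf (n σ : ℕ) (h : σ + 3 ≤ n) (v : Fin n)
    (hv : n - σ - 1 < v.val) :
    (broom n σ).strUp v
      = ⟨v.val - (n - σ - 1), by have := v.isLt; omega⟩ ::
          List.replicate (n - σ - 1) (0 : Fin (σ + 1)) := by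
  rw [LTree.strUp]
  rw [dif_neg (by omega)]
  have hlab : (broom n σ).label v = ⟨v.val - (n - σ - 1), by have := v.isLt; omega⟩ := by
    rw [broom_label]; unfold blabel; rw [if_neg (by omega)]
  have hpar : (broom n σ).parent v = ⟨n - σ - 1, by have := v.isLt; omega⟩ := by
    rw [broom_parent]; unfold bparent; rw [if_neg (by omega)]
  rw [hlab, hpar, broom_strUp_path n σ _ le_rfl _]

theorem broom_isLeaf_iff (n σ : ℕ) (hσ : 1 ≤ σ) (h : σ + 3 ≤ n) (v : Fin n) :
    (broom n σ).isLeaf v ↔ n - σ - 1 < v.val := by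
  constructor
  · intro hl
    by_contra hle
    push_neg at hle
    refine hl ⟨v.val + 1, by have := v.isLt; omega⟩ (by show v.val + 1 ≠ 0; omega) ?_
    rw [broom_parent]
    unfold bparent
    by_cases h1 : v.val + 1 ≤ n - σ - 1
    · rw [if_pos h1]; exact Fin.ext rfl
    · rw [if_neg h1]; exact Fin.ext (by show n - σ - 1 = v.val; omega)
  · intro hv u hu hpar
    rw [broom_parent] at hpar
    have hval : (bparent n σ u).val ≤ n - σ - 1 := by
      unfold bparent
      split_ifs with h1
      · show u.val - 1 ≤ n - σ - 1; omega
      · show n - σ - 1 ≤ n - σ - 1; omega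
    rw [hpar] at hval
    omega

theorem broom_mem_suffix (n σ : ℕ) (hσ : 1 ≤ σ) (h : σ + 3 ≤ n) (j : ℕ) (hj : j ≤ n - σ - 1)
    (i : Fin (σ + 1)) (hi : 1 ≤ i.val) :
    List.replicate j (0 : Fin (σ + 1)) ++ [i] ∈ (broom n σ).SuffixF := by
  have hiσ : i.val ≤ σ := by have := i.isLt; omega
  refine ⟨⟨n - σ - 1 + i.val, by omega⟩, ?_, j + 1, ?_⟩
  · rw [broom_isLeaf_iff n σ hσ h]
    show n - σ - 1 < n - σ - 1 + i.val
    omega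
  · rw [broom_strUp_leaf n σ h _ (by show n - σ - 1 < n - σ - 1 + i.val; omega)]
    rw [List.take_succ_cons, List.take_replicate, min_eq_left hj,
      List.reverse_cons, List.reverse_replicate]
    congr 2
    apply Fin.ext
    show i.val = n - σ - 1 + i.val - (n - σ - 1)
    omega

theorem broom_suffix_bound (n σ : ℕ) (hσ : 1 ≤ σ) (h : σ + 3 ≤ n) (m : ℕ) (i : Fin (σ + 1))
    (hmem : List.replicate m (0 : Fin (σ + 1)) ++ [i] ∈ (broom n σ).SuffixF) :
    m ≤ n - σ - 1 := by
  obtain ⟨v, hv, m', heq⟩ := hmem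
  rw [broom_isLeaf_iff n σ hσ h] at hv
  have hlen := congrArg List.length heq
  rw [broom_strUp_leaf n σ h v hv] at hlen
  simp only [List.length_append, List.length_replicate, List.length_cons,
    List.length_reverse, List.length_take] at hlen
  have := min_le_right m' (n - σ - 1 + 1)
  omega

/-- for every `n` and `σ = Θ(n)` (here any `3 ≤ σ ≤ n - 3`),
there is a trie with `n` nodes (the broom) such that ANY partial DFA accepting
exactly the set `Suffix(T_f)` of its suffixes has at least `σ(n - σ - 2)`
transitions; in particular the smallest DFA for `Suffix(T_f)` has
`Ω(σn) = Ω(n²)` transitions. -/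
theorem stmt12 :
    ∀ n σ : ℕ, 3 ≤ σ → σ ≤ n - 3 →
      ∃ T : LTree n (Fin (σ + 1)), T.isTrie ∧
        ∀ (Q : Type) [Finite Q] (M : PDFA (Fin (σ + 1)) Q),
          M.lang = T.SuffixF → σ * (n - σ - 2) ≤ M.transitions := by
  intro n σ hσ hn
  have h : σ + 3 ≤ n := by omega
  refine ⟨broom n σ, broom_isTrie n σ h, ?_⟩
  intro Q _ M hM
  obtain ⟨one, hone⟩ : ∃ a : Fin (σ + 1), a.val = 1 := ⟨⟨1, by omega⟩, rfl⟩
  have hmemL : ∀ j ≤ n - σ - 1, ∀ i : Fin (σ + 1), 1 ≤ i.val →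
      ∃ q ∈ M.accept,
        M.evalFrom M.start (List.replicate j (0 : Fin (σ + 1)) ++ [i]) = some q := by
    intro j hj i hi
    have : List.replicate j (0 : Fin (σ + 1)) ++ [i] ∈ M.lang := by
      rw [hM]; exact broom_mem_suffix n σ (by omega) h j hj i hi
    exact this
  have hsome : ∀ j ≤ n - σ - 1,
      (M.evalFrom M.start (List.replicate j (0 : Fin (σ + 1)))).isSome := by
    intro j hj
    obtain ⟨q, _, hq⟩ := hmemL j hj one (by omega)
    rw [PDFA.evalFrom_append] at hq
    cases he : M.evalFrom M.start (List.replicate j (0 : Fin (σ + 1))) with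
    | none => rw [he] at hq; simp at hq
    | some q' => simp
  obtain ⟨qf, hqf⟩ : ∃ qf : Fin (n - σ - 1 + 1) → Q, ∀ j : Fin (n - σ - 1 + 1),
      M.evalFrom M.start (List.replicate j.val (0 : Fin (σ + 1))) = some (qf j) := by
    refine ⟨fun j => (M.evalFrom M.start (List.replicate j.val 0)).get
      (hsome j.val (Nat.lt_succ_iff.mp j.isLt)), fun j => (Option.some_get _).symm⟩
  have hdec : ∀ (j : Fin (n - σ - 1 + 1)) (w : List (Fin (σ + 1))),
      M.evalFrom M.start (List.replicate j.val (0 : Fin (σ + 1)) ++ w)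
        = M.evalFrom (qf j) w := by
    intro j w
    rw [PDFA.evalFrom_append, hqf j, Option.bind_some]
  have hstep : ∀ (j : Fin (n - σ - 1 + 1)) (i : Fin (σ + 1)), 1 ≤ i.val →
      M.step (qf j) i ≠ none := by
    intro j i hi
    obtain ⟨q, _, hq⟩ := hmemL j.val (Nat.lt_succ_iff.mp j.isLt) i hi
    rw [hdec j [i], PDFA.evalFrom_singleton] at hq
    rw [hq]; simp
  have hinj : Function.Injective qf := by
    have key : ∀ j j' : Fin (n - σ - 1 + 1), j.val < j'.val → qf j ≠ qf j' := by
      intro j j' hlt heq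
      obtain ⟨q, hqa, hq⟩ := hmemL (n - σ - 1) le_rfl one (by omega)
      have hjk : j.val ≤ n - σ - 1 := Nat.lt_succ_iff.mp j.isLt
      have hsplit : List.replicate (n - σ - 1) (0 : Fin (σ + 1)) ++ [one]
          = List.replicate j.val (0 : Fin (σ + 1)) ++
            (List.replicate (n - σ - 1 - j.val) (0 : Fin (σ + 1)) ++ [one]) := by
        rw [← List.append_assoc, ← List.replicate_add]
        congr 2
        omega
      rw [hsplit, hdec j] at hq
      have hq' : M.evalFrom M.start
          (List.replicate (j'.val + (n - σ - 1 - j.val)) (0 : Fin (σ + 1)) ++ [one])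
            = some q := by
        rw [List.replicate_add, List.append_assoc, hdec j', ← heq]
        exact hq
      have hmem' : List.replicate (j'.val + (n - σ - 1 - j.val)) (0 : Fin (σ + 1)) ++ [one]
          ∈ M.lang := ⟨q, hqa, hq'⟩
      rw [hM] at hmem'
      have := broom_suffix_bound n σ (by omega) h _ one hmem'
      omega
    intro j j' heq
    rcases lt_trichotomy j.val j'.val with hl | hl | hl
    · exact absurd heq (key j j' hl)
    · exact Fin.ext hl
    · exact absurd heq.symm (key j' j hl)
  show σ * (n - σ - 2) ≤ {p : Q × Fin (σ + 1) | M.step p.1 p.2 ≠ none}.ncard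
  let f : Fin (n - σ - 1 + 1) × Fin σ →
      {p : Q × Fin (σ + 1) | M.step p.1 p.2 ≠ none} :=
    fun p => ⟨(qf p.1, p.2.succ), hstep p.1 p.2.succ (by rw [Fin.val_succ]; omega)⟩
  have hfinj : Function.Injective f := by
    intro p p' hfe
    have hval := congrArg Subtype.val hfe
    have h1 : qf p.1 = qf p'.1 := congrArg Prod.fst hval
    have h2 : p.2.succ = p'.2.succ := congrArg Prod.snd hval
    have e1 : p.1 = p'.1 := hinj h1
    have e2 : p.2 = p'.2 := Fin.succ_injective _ h2
    exact Prod.ext e1 e2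
  have hcard := Nat.card_le_card_of_injective f hfinj
  rw [Nat.card_prod, Nat.card_eq_fintype_card, Nat.card_eq_fintype_card,
    Fintype.card_fin, Fintype.card_fin] at hcard
  rw [← Nat.card_coe_set_eq]
  calc σ * (n - σ - 2) ≤ σ * (n - σ - 1 + 1) := Nat.mul_le_mul le_rfl (by omega)
    _ = (n - σ - 1 + 1) * σ := Nat.mul_comm _ _
    _ ≤ _ := hcard
end

section
/- For every n and σ with σ = Θ(n), there exists a forward trie with n nodes whose CDAWG has at least σ(n − σ − 2) = Ω(n²) edges, while its number of nodes is at most 2n − 3. -/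
/-!
The broom: a handle of `m` edges labelled `0` below the root, ending in `σ ≥ 2`
bristles with the distinct labels `1, …, σ`. Every `0^k` with `k ≤ m` is left-maximal
(it spells the root path to the `k`-th handle node) and right-maximal (it extends by
two different bristle labels), so it is a CDAWG node with an out-edge for each of the
`σ` bristle labels, giving `(m + 1) σ` edges. Conversely, the only strings of the broom
are the `0^k` and the `0^k c` with `c ≠ 0`, and `0^k c` can only be left-maximal through
a root occurrence, which forces `k = m`; hence there are at most `m + 1 + σ = n` nodes.
-/

namespace LTree

variable {n : ℕ} {A : Type*}

/-- The nodes of the CDAWG of the forward trie `T`. -/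
def maximalSubstrs (T : LTree n A) : Set (List A) :=
  {X | X ∈ T.SubstrD ∧ T.leftMaximalF X ∧ T.rightMaximalF X}

/-- The edges of the CDAWG of the forward trie `T`, each given by its source node and
the first character of its label. -/
def cdawgEdges (T : LTree n A) : Set (List A × A) :=
  {p | p.1 ∈ T.SubstrD ∧ T.leftMaximalF p.1 ∧ T.rightMaximalF p.1 ∧
    p.1 ++ [p.2] ∈ T.SubstrD}

theorem finite_substrD (T : LTree n A) : T.SubstrD.Finite := by
  refine (Set.finite_iUnion fun v => (T.strUp v).inits.finite_toSet.image List.reverse).subset ?_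
  rintro _ ⟨v, m, rfl⟩
  exact Set.mem_iUnion.2 ⟨v, _, (List.mem_inits _ _).2 (List.take_prefix m _), rfl⟩

theorem finite_cdawgEdges [Finite A] (T : LTree n A) : T.cdawgEdges.Finite :=
  (T.finite_substrD.prod Set.finite_univ).subset fun _ hp => ⟨hp.1, trivial⟩

/-- Nodes `0, …, m` form the handle; node `m + 1 + i` is a leaf below node `m`
reached by the label `i + 1`. -/
def broom (m σ : ℕ) : LTree (m + σ + 1) (Fin (σ + 1)) where
  parent v := if v.val ≤ m then ⟨v.val - 1, by omega⟩ else ⟨m, by omega⟩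
  label v := if v.val ≤ m then 0 else ⟨v.val - m, by omega⟩
  hp v hv := by split <;> · dsimp only; omega

variable {m σ : ℕ}

theorem isTrie_broom : (broom m σ).isTrie := by
  intro u v hu hv hpar hlab
  simp only [broom] at hpar hlab
  split_ifs at hpar hlab <;> simp only [Fin.ext_iff, Fin.val_zero] at hpar hlab ⊢ <;> omega

theorem strUp_broom_of_le {k : ℕ} (hk : k ≤ m) :
    (broom m σ).strUp ⟨k, by omega⟩ = List.replicate k 0 := by
  induction k with
  | zero => rw [strUp, dif_pos rfl, List.replicate_zero]
  | succ k ih =>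
    have hparent : (broom m σ).parent ⟨k + 1, by omega⟩ = ⟨k, by omega⟩ := by
      simp only [broom, if_pos hk, Nat.add_sub_cancel]
    have hlabel : (broom m σ).label ⟨k + 1, by omega⟩ = 0 := if_pos hk
    rw [strUp, dif_neg k.succ_ne_zero, hparent, hlabel, ih (by omega), List.replicate_succ]

theorem strUp_broom_bristle (i : Fin σ) :
    (broom m σ).strUp ⟨m + 1 + i, by omega⟩ = i.succ :: List.replicate m 0 := by
  have hleaf : ¬ m + 1 + i.val ≤ m := by omega
  have hparent : (broom m σ).parent ⟨m + 1 + i, by omega⟩ = ⟨m, by omega⟩ := if_neg hleaf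
  have hlabel : (broom m σ).label ⟨m + 1 + i, by omega⟩ = i.succ := by
    simp only [broom, if_neg hleaf, Fin.ext_iff, Fin.val_succ]
    omega
  rw [strUp, dif_neg (show m + 1 + i.val ≠ 0 by omega), hparent, hlabel, strUp_broom_of_le le_rfl]

theorem strUp_broom (v : Fin (m + σ + 1)) :
    (∃ k ≤ m, (broom m σ).strUp v = List.replicate k 0) ∨
      ∃ i : Fin σ, (broom m σ).strUp v = i.succ :: List.replicate m 0 := by
  by_cases hv : v.val ≤ m
  · exact Or.inl ⟨v, hv, strUp_broom_of_le hv⟩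
  · refine Or.inr ⟨⟨v - (m + 1), by omega⟩, ?_⟩
    convert strUp_broom_bristle _ using 2
    simp only [Fin.ext_iff]
    omega

theorem mem_substrD_broom {X : List (Fin (σ + 1))} :
    X ∈ (broom m σ).SubstrD ↔
      (∃ j ≤ m, X = List.replicate j 0) ∨
        ∃ j ≤ m, ∃ i : Fin σ, X = List.replicate j 0 ++ [i.succ] := by
  constructor
  · rintro ⟨v, t, rfl⟩
    rcases strUp_broom v with ⟨k, hk, h⟩ | ⟨i, h⟩ <;> rw [h]
    · exact Or.inl ⟨min t k, by omega, by simp [List.take_replicate]⟩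
    · rcases t with _ | t
      · exact Or.inl ⟨0, by omega, rfl⟩
      · exact Or.inr ⟨min t m, by omega, i, by simp [List.take_replicate]⟩
  · rintro (⟨j, hj, rfl⟩ | ⟨j, hj, i, rfl⟩)
    · exact ⟨⟨j, by omega⟩, j, by simp [strUp_broom_of_le hj]⟩
    · refine ⟨⟨m + 1 + i, by omega⟩, j + 1, ?_⟩
      simp [strUp_broom_bristle, List.take_replicate, hj]

theorem eq_zero_of_cons_mem_substrD_broom {d : Fin (σ + 1)} {j : ℕ} {i : Fin σ}
    (h : d :: (List.replicate j 0 ++ [i.succ]) ∈ (broom m σ).SubstrD) : d = 0 := by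
  rcases mem_substrD_broom.1 h with ⟨j', -, he⟩ | ⟨_ | j', -, i', he⟩
  · have : i.succ ∈ List.replicate j' (0 : Fin (σ + 1)) := by simp [← he]
    exact absurd (List.eq_of_mem_replicate this) (Fin.succ_ne_zero i)
  · simp at he
  · rw [List.replicate_succ, List.cons_append] at he
    exact (List.cons.inj he).1

theorem eq_of_leftMaximalF_broom {j : ℕ} {i : Fin σ}
    (h : (broom m σ).leftMaximalF (List.replicate j 0 ++ [i.succ])) : j = m := by
  rcases h with ⟨a, b, hab, ha, hb⟩ | ⟨v, hv⟩
  · exact absurd ((eq_zero_of_cons_mem_substrD_broom ha).trans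
      (eq_zero_of_cons_mem_substrD_broom hb).symm) hab
  · rcases strUp_broom v with ⟨k, -, h⟩ | ⟨i', h⟩ <;>
      rw [h] at hv
    · have : i.succ ∈ List.replicate k (0 : Fin (σ + 1)) := by
        simpa using congrArg (i.succ ∈ ·) hv
      exact absurd (List.eq_of_mem_replicate this) (Fin.succ_ne_zero i)
    · simpa using congrArg List.length hv

theorem replicate_mem_maximalSubstrs_broom (hσ : 2 ≤ σ) {k : ℕ} (hk : k ≤ m) :
    List.replicate k 0 ∈ (broom m σ).maximalSubstrs := by
  refine ⟨mem_substrD_broom.2 (Or.inl ⟨k, hk, rfl⟩), ?_, ?_⟩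
  · exact Or.inr ⟨⟨k, by omega⟩, by simp [strUp_broom_of_le hk]⟩
  · refine Or.inl ⟨Fin.succ ⟨0, by omega⟩, Fin.succ ⟨1, by omega⟩, by simp, ?_, ?_⟩ <;>
      exact mem_substrD_broom.2 (Or.inr ⟨k, hk, _, rfl⟩)

theorem le_ncard_cdawgEdges_broom (hσ : 2 ≤ σ) :
    (m + 1) * σ ≤ (broom m σ).cdawgEdges.ncard := by
  let f : Fin (m + 1) × Fin σ → List (Fin (σ + 1)) × Fin (σ + 1) :=
    fun p => (List.replicate p.1 0, p.2.succ)
  have hf : f.Injective := fun p q h =>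
    Prod.ext (Fin.ext (List.replicate_left_injective _ (congrArg Prod.fst h)))
      (Fin.succ_injective _ (congrArg Prod.snd h))
  have hsub : Set.range f ⊆ (broom m σ).cdawgEdges := by
    rintro _ ⟨⟨k, i⟩, rfl⟩
    have hk : k.val ≤ m := by omega
    obtain ⟨hX, hl, hr⟩ := replicate_mem_maximalSubstrs_broom hσ hk
    exact ⟨hX, hl, hr, mem_substrD_broom.2 (Or.inr ⟨k, hk, i, rfl⟩)⟩
  calc (m + 1) * σ = (Set.range f).ncard := by simp [Set.ncard_range_of_injective hf]
    _ ≤ _ := Set.ncard_le_ncard hsub (finite_cdawgEdges _)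

theorem ncard_maximalSubstrs_broom_le : (broom m σ).maximalSubstrs.ncard ≤ m + 1 + σ := by
  let g : Fin (m + 1) ⊕ Fin σ → List (Fin (σ + 1)) :=
    Sum.elim (fun k => List.replicate k 0) (fun i => List.replicate m 0 ++ [i.succ])
  have hsub : (broom m σ).maximalSubstrs ⊆ Set.range g := by
    rintro X ⟨hX, hl, -⟩
    rcases mem_substrD_broom.1 hX with ⟨j, hj, rfl⟩ | ⟨j, -, i, rfl⟩
    · exact ⟨Sum.inl ⟨j, by omega⟩, rfl⟩
    · rw [eq_of_leftMaximalF_broom hl]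
      exact ⟨Sum.inr i, rfl⟩
  calc _ ≤ (Set.range g).ncard := Set.ncard_le_ncard hsub (Set.finite_range g)
    _ ≤ (Set.univ : Set (Fin (m + 1) ⊕ Fin σ)).ncard := by
      rw [← Set.image_univ]
      exact Set.ncard_image_le Set.finite_univ
    _ = m + 1 + σ := by simp

end LTree

/-- for every `n` and `σ` with `3 ≤ σ ≤ n - 3` (in particular
`σ = Θ(n)`), there is a forward trie with `n` nodes (the broom) whose CDAWG
has at least `σ(n - σ - 2)` edges, while its number of nodes (maximal
substrings) is at most `2n - 3`. -/
theorem stmt15 :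
    ∀ n σ : ℕ, 3 ≤ σ → σ ≤ n - 3 →
      ∃ T : LTree n (Fin (σ + 1)), T.isTrie ∧
        σ * (n - σ - 2) ≤
          {p : List (Fin (σ + 1)) × Fin (σ + 1) |
            p.1 ∈ T.SubstrD ∧ T.leftMaximalF p.1 ∧ T.rightMaximalF p.1 ∧
            p.1 ++ [p.2] ∈ T.SubstrD}.ncard ∧
        {X | X ∈ T.SubstrD ∧ T.leftMaximalF X ∧
          T.rightMaximalF X}.ncard ≤ 2 * n - 3 := by
  intro n σ hσ hn
  obtain ⟨m, rfl⟩ : ∃ m, n = m + σ + 1 := ⟨n - σ - 1, by omega⟩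
  refine ⟨LTree.broom m σ, LTree.isTrie_broom, ?_, ?_⟩
  · calc σ * (m + σ + 1 - σ - 2) ≤ (m + 1) * σ := by
          rw [mul_comm]; exact Nat.mul_le_mul_right σ (by omega)
      _ ≤ _ := LTree.le_ncard_cdawgEdges_broom (by omega)
  · exact LTree.ncard_maximalSubstrs_broom_le.trans (by omega)
end
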